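/- arXiv:2205.08137 — 5 statements merged into one kernel-verified Lean document; each statement's English description precedes it below -/
import Mathlib

section
/- Let A₁ and A₂ be real n×n symmetric matrices, and let λᵢ(M) denote the i-th smallest eigenvalue of a symmetric matrix M. Then for each 1 ≤ i ≤ n and each 0 ≤ j ≤ n−i, one has λᵢ(A₁+A₂) ≤ λ_{i+j}(A₁) + λ_{n−j}(A₂). -/
/-- The eigenvalues of a Hermitian matrix, sorted in ascending order. -/
noncomputable def sortedEig {n : ℕ} {A : Matrix (Fin n) (Fin n) ℝ}
    (hA : A.IsHermitian) : Fin n → ℝ :=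
  hA.eigenvalues ∘ Tuple.sort hA.eigenvalues

/-!
Courant–Fischer style dimension count. Let `V₀` be spanned by the eigenvectors of `A₁ + A₂`
of index `≥ i`, `V₁` by those of `A₁` of index `≤ i + j` and `V₂` by those of `A₂` of index
`≤ n - j`. Their dimensions add up to `2n + 1`, so they share a nonzero vector `x`. On `V₀` the
Rayleigh quotient of `A₁ + A₂` is at least `λᵢ(A₁ + A₂)`, on `V₁` that of `A₁` is at most
`λ_{i+j}(A₁)` and on `V₂` that of `A₂` is at most `λ_{n-j}(A₂)`; evaluating at `x` gives the
inequality.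
-/

open Finset Module Submodule
open scoped InnerProductSpace

section EigenvectorSpan

variable {E ι : Type*} [NormedAddCommGroup E] [InnerProductSpace ℝ E]
  {T : E →ₗ[ℝ] E} {b : ι → E} {μ : ι → ℝ}

theorem inner_map_sum_smul_eigenvectors (hb : Orthonormal ℝ b) (hT : ∀ k, T (b k) = μ k • b k)
    (s : Finset ι) (c : ι → ℝ) :
    ⟪∑ k ∈ s, c k • b k, T (∑ k ∈ s, c k • b k)⟫_ℝ = ∑ k ∈ s, μ k * c k ^ 2 := by
  have hTsum : T (∑ k ∈ s, c k • b k) = ∑ k ∈ s, (μ k * c k) • b k := by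
    simp only [map_sum, map_smul, hT, smul_smul, mul_comm]
  rw [hTsum, hb.inner_sum]
  exact sum_congr rfl fun k _ => by simp only [conj_trivial]; ring

theorem norm_sum_smul_orthonormal_sq (hb : Orthonormal ℝ b) (s : Finset ι) (c : ι → ℝ) :
    ‖∑ k ∈ s, c k • b k‖ ^ 2 = ∑ k ∈ s, c k ^ 2 := by
  rw [← real_inner_self_eq_norm_sq, hb.inner_sum]
  exact sum_congr rfl fun k _ => by simp only [conj_trivial]; ring

theorem inner_map_self_le_of_mem_span_eigenvectors (hb : Orthonormal ℝ b)
    (hT : ∀ k, T (b k) = μ k • b k) {s : Finset ι} {r : ℝ} (hr : ∀ k ∈ s, μ k ≤ r) {x : E}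
    (hx : x ∈ span ℝ (b '' s)) : ⟪x, T x⟫_ℝ ≤ r * ‖x‖ ^ 2 := by
  obtain ⟨c, rfl⟩ := (mem_span_image_finset_iff_exists_fun' ℝ).mp hx
  rw [inner_map_sum_smul_eigenvectors hb hT, norm_sum_smul_orthonormal_sq hb, mul_sum]
  exact sum_le_sum fun k hk => mul_le_mul_of_nonneg_right (hr k hk) (sq_nonneg _)

theorem le_inner_map_self_of_mem_span_eigenvectors (hb : Orthonormal ℝ b)
    (hT : ∀ k, T (b k) = μ k • b k) {s : Finset ι} {r : ℝ} (hr : ∀ k ∈ s, r ≤ μ k) {x : E}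
    (hx : x ∈ span ℝ (b '' s)) : r * ‖x‖ ^ 2 ≤ ⟪x, T x⟫_ℝ := by
  obtain ⟨c, rfl⟩ := (mem_span_image_finset_iff_exists_fun' ℝ).mp hx
  rw [inner_map_sum_smul_eigenvectors hb hT, norm_sum_smul_orthonormal_sq hb, mul_sum]
  exact sum_le_sum fun k hk => mul_le_mul_of_nonneg_right (hr k hk) (sq_nonneg _)

end EigenvectorSpan

theorem LinearIndependent.finrank_span_image_finset {R M ι : Type*} [Semiring R]
    [StrongRankCondition R] [Nontrivial R] [AddCommMonoid M] [Module R M] {b : ι → M}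
    (hb : LinearIndependent R b) (s : Finset ι) :
    finrank R (span R (b '' s)) = #s := by
  rw [Set.image_eq_range]
  exact (finrank_span_eq_card (hb.comp _ Subtype.val_injective)).trans (Fintype.card_coe s)

theorem Submodule.exists_ne_zero_mem_inf_inf_of_finrank_add_gt {K V : Type*} [DivisionRing K]
    [AddCommGroup V] [Module K V] [FiniteDimensional K V] (U W X : Submodule K V)
    (h : 2 * finrank K V < finrank K U + finrank K W + finrank K X) :
    ∃ x ∈ U ⊓ W ⊓ X, x ≠ 0 := by
  have hUW := finrank_sup_add_finrank_inf_eq U W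
  have hUWX := finrank_sup_add_finrank_inf_eq (U ⊓ W) X
  have h₁ := finrank_le (U ⊔ W)
  have h₂ := finrank_le (U ⊓ W ⊔ X)
  refine exists_mem_ne_zero_of_ne_bot fun hbot => ?_
  rw [hbot, finrank_bot] at hUWX
  omega

theorem monotone_sortedEig {n : ℕ} {A : Matrix (Fin n) (Fin n) ℝ} (hA : A.IsHermitian) :
    Monotone (sortedEig hA) :=
  Tuple.monotone_sort hA.eigenvalues

namespace Matrix.IsHermitian

variable {n : ℕ} {A : Matrix (Fin n) (Fin n) ℝ}

noncomputable def sortedEigenvectorBasis (hA : A.IsHermitian) :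
    OrthonormalBasis (Fin n) ℝ (EuclideanSpace ℝ (Fin n)) :=
  hA.eigenvectorBasis.reindex (Tuple.sort hA.eigenvalues).symm

theorem toEuclideanLin_sortedEigenvectorBasis (hA : A.IsHermitian) (k : Fin n) :
    toEuclideanLin A (hA.sortedEigenvectorBasis k) =
      sortedEig hA k • hA.sortedEigenvectorBasis k := by
  have h := hA.mulVec_eigenvectorBasis (Tuple.sort hA.eigenvalues k)
  apply (WithLp.equiv 2 (Fin n → ℝ)).injective
  simpa [Matrix.ofLp_toLpLin, sortedEigenvectorBasis, sortedEig] using h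

theorem inner_toEuclideanLin_le_sortedEig_mul (hA : A.IsHermitian) (m : Fin n)
    {x : EuclideanSpace ℝ (Fin n)} (hx : x ∈ span ℝ (hA.sortedEigenvectorBasis '' Iic m)) :
    ⟪x, toEuclideanLin A x⟫_ℝ ≤ sortedEig hA m * ‖x‖ ^ 2 :=
  inner_map_self_le_of_mem_span_eigenvectors hA.sortedEigenvectorBasis.orthonormal
    hA.toEuclideanLin_sortedEigenvectorBasis
    (fun _ hk => monotone_sortedEig hA (mem_Iic.mp hk)) hx

theorem sortedEig_mul_le_inner_toEuclideanLin (hA : A.IsHermitian) (m : Fin n)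
    {x : EuclideanSpace ℝ (Fin n)} (hx : x ∈ span ℝ (hA.sortedEigenvectorBasis '' Ici m)) :
    sortedEig hA m * ‖x‖ ^ 2 ≤ ⟪x, toEuclideanLin A x⟫_ℝ :=
  le_inner_map_self_of_mem_span_eigenvectors hA.sortedEigenvectorBasis.orthonormal
    hA.toEuclideanLin_sortedEigenvectorBasis
    (fun _ hk => monotone_sortedEig hA (mem_Ici.mp hk)) hx

theorem finrank_span_sortedEigenvectorBasis_Iic (hA : A.IsHermitian) (m : Fin n) :
    finrank ℝ (span ℝ (hA.sortedEigenvectorBasis '' Iic m)) = m + 1 := by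
  rw [hA.sortedEigenvectorBasis.orthonormal.linearIndependent.finrank_span_image_finset,
    Fin.card_Iic]

theorem finrank_span_sortedEigenvectorBasis_Ici (hA : A.IsHermitian) (m : Fin n) :
    finrank ℝ (span ℝ (hA.sortedEigenvectorBasis '' Ici m)) = n - m := by
  rw [hA.sortedEigenvectorBasis.orthonormal.linearIndependent.finrank_span_image_finset,
    Fin.card_Ici]

end Matrix.IsHermitian

/-- Weyl's inequality (upper bound form): for real symmetric matrices `A₁`, `A₂`,
`λᵢ(A₁+A₂) ≤ λ_{i+j}(A₁) + λ_{n−j}(A₂)` for `1 ≤ i ≤ n`, `0 ≤ j ≤ n − i`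
(1-based indexing, eigenvalues in ascending order). -/
theorem weyl_upper {n : ℕ} (A₁ A₂ : Matrix (Fin n) (Fin n) ℝ)
    (h₁ : A₁.IsHermitian) (h₂ : A₂.IsHermitian)
    (i j : ℕ) (hi1 : 1 ≤ i) (hin : i ≤ n) (hj : j ≤ n - i) :
    sortedEig (h₁.add h₂) ⟨i - 1, by omega⟩ ≤
      sortedEig h₁ ⟨i + j - 1, by omega⟩ + sortedEig h₂ ⟨n - j - 1, by omega⟩ := by
  set a : Fin n := ⟨i - 1, by omega⟩
  set b : Fin n := ⟨i + j - 1, by omega⟩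
  set d : Fin n := ⟨n - j - 1, by omega⟩
  obtain ⟨x, ⟨⟨hxa, hxb⟩, hxd⟩, hx0⟩ := exists_ne_zero_mem_inf_inf_of_finrank_add_gt
    (span ℝ ((h₁.add h₂).sortedEigenvectorBasis '' Ici a))
    (span ℝ (h₁.sortedEigenvectorBasis '' Iic b)) (span ℝ (h₂.sortedEigenvectorBasis '' Iic d))
    (by simp only [finrank_euclideanSpace_fin, a, b, d,
      Matrix.IsHermitian.finrank_span_sortedEigenvectorBasis_Ici,
      Matrix.IsHermitian.finrank_span_sortedEigenvectorBasis_Iic]; omega)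
  refine le_of_mul_le_mul_right ?_ (pow_pos (norm_pos_iff.mpr hx0) 2)
  calc sortedEig (h₁.add h₂) a * ‖x‖ ^ 2
      ≤ ⟪x, Matrix.toEuclideanLin (A₁ + A₂) x⟫_ℝ :=
        (h₁.add h₂).sortedEig_mul_le_inner_toEuclideanLin a hxa
    _ = ⟪x, Matrix.toEuclideanLin A₁ x⟫_ℝ + ⟪x, Matrix.toEuclideanLin A₂ x⟫_ℝ := by
        rw [map_add, LinearMap.add_apply, inner_add_right]
    _ ≤ sortedEig h₁ b * ‖x‖ ^ 2 + sortedEig h₂ d * ‖x‖ ^ 2 :=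
        add_le_add (h₁.inner_toEuclideanLin_le_sortedEig_mul b hxb)
          (h₂.inner_toEuclideanLin_le_sortedEig_mul d hxd)
    _ = (sortedEig h₁ b + sortedEig h₂ d) * ‖x‖ ^ 2 := (add_mul _ _ _).symm
end

section
/- Let A = diag(a₁,…,aₙ) with 0 < a₁ ≤ … ≤ aₙ, let u : ℝ → ℝ be C², and set s = (1/2)∑ᵢ aᵢ xᵢ² and U(x) = u(s). If u'(s) > 0 and u''(s) ≤ 0, then for each 1 ≤ i ≤ n the i-th smallest eigenvalue of the Hessian D²U(x) satisfies aᵢ u'(s) + (∑ⱼ aⱼ² xⱼ²) u''(s) ≤ λᵢ(D²U(x)) ≤ aᵢ u'(s). -/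
/-!
The Hessian is `u'(s) A + u''(s) (Ax)(Ax)ᵀ` with `A = diag a`, so its quadratic form is
`w ↦ u'(s) ⟪w, A w⟫ + u''(s) ⟪Ax, w⟫²`. On vectors supported on the coordinates `j ≤ i`
this is at most `aᵢ u'(s) ‖w‖²`, because `u''(s) ≤ 0`; on vectors supported on the coordinates
`j ≥ i` it is at least `(aᵢ u'(s) + ‖Ax‖² u''(s)) ‖w‖²` by Cauchy–Schwarz. The Courant–Fischer
principle turns these Rayleigh-quotient bounds on subspaces of dimension `i + 1` and `n - i` into
bounds on the `i`-th smallest eigenvalue: such a subspace meets the span of the eigenvectors of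
the complementary eigenvalues nontrivially.
-/

open Module Matrix
open scoped RealInnerProductSpace

theorem Submodule.le_of_bounds_of_finrank_lt_add {E : Type*} [NormedAddCommGroup E] [Module ℝ E]
    [FiniteDimensional ℝ E] {q : E → ℝ} {V W : Submodule ℝ E}
    (hVW : finrank ℝ E < finrank ℝ V + finrank ℝ W) {d c : ℝ}
    (hV : ∀ x ∈ V, d * ‖x‖ ^ 2 ≤ q x) (hW : ∀ x ∈ W, q x ≤ c * ‖x‖ ^ 2) : d ≤ c := by
  obtain ⟨x, hxV, hxW, hx⟩ : ∃ x ∈ V, x ∈ W ∧ x ≠ 0 := by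
    by_contra! h
    exact hVW.not_ge (Submodule.finrank_add_finrank_le_of_disjoint (Submodule.disjoint_def.mpr h))
  have hx : 0 < ‖x‖ ^ 2 := by positivity
  exact le_of_mul_le_mul_right ((hV x hxV).trans (hW x hxW)) hx

namespace OrthonormalBasis

variable {ι E : Type*} [Fintype ι] [NormedAddCommGroup E] [InnerProductSpace ℝ E]

noncomputable def spanSubset (b : OrthonormalBasis ι ℝ E) (s : Finset ι) : Submodule ℝ E :=
  (Pi.spanSubset ℝ (s : Set ι)).comap b.toBasis.equivFun.toLinearMap

variable (b : OrthonormalBasis ι ℝ E)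

theorem mem_spanSubset_iff {s : Finset ι} {x : E} :
    x ∈ b.spanSubset s ↔ ∀ j ∉ s, ⟪b j, x⟫ = 0 := by
  simp [spanSubset, Pi.mem_spanSubset_iff, b.repr_apply_apply]

theorem finrank_spanSubset (s : Finset ι) : finrank ℝ (b.spanSubset s) = s.card := by
  rw [spanSubset, Submodule.comap_equiv_eq_map_symm, LinearEquiv.finrank_map_eq,
    Pi.dim_spanSubset, Set.ncard_coe_finset]

end OrthonormalBasis

namespace LinearMap.IsSymmetric

section

variable {ι E : Type*} [Fintype ι] [NormedAddCommGroup E] [InnerProductSpace ℝ E]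
  {T : E →ₗ[ℝ] E} {b : OrthonormalBasis ι ℝ E} {μ : ι → ℝ}

theorem inner_map_self_eq_sum (hT : T.IsSymmetric) (hb : ∀ j, T (b j) = μ j • b j) (x : E) :
    ⟪x, T x⟫ = ∑ j, μ j * ⟪b j, x⟫ ^ 2 := by
  rw [← b.sum_inner_mul_inner]
  refine Finset.sum_congr rfl fun j _ => ?_
  rw [← hT, hb, real_inner_smul_left, real_inner_comm]
  ring

theorem mul_norm_sq_le_inner_map_self (hT : T.IsSymmetric) (hb : ∀ j, T (b j) = μ j • b j)
    {s : Finset ι} {d : ℝ} (hs : ∀ j ∈ s, d ≤ μ j) {x : E} (hx : x ∈ b.spanSubset s) :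
    d * ‖x‖ ^ 2 ≤ ⟪x, T x⟫ := by
  rw [hT.inner_map_self_eq_sum hb, ← b.sum_sq_inner_right, Finset.mul_sum]
  refine Finset.sum_le_sum fun j _ => ?_
  by_cases hj : j ∈ s
  · exact mul_le_mul_of_nonneg_right (hs j hj) (sq_nonneg _)
  · simp [b.mem_spanSubset_iff.mp hx j hj]

theorem inner_map_self_le_mul_norm_sq (hT : T.IsSymmetric) (hb : ∀ j, T (b j) = μ j • b j)
    {s : Finset ι} {c : ℝ} (hs : ∀ j ∈ s, μ j ≤ c) {x : E} (hx : x ∈ b.spanSubset s) :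
    ⟪x, T x⟫ ≤ c * ‖x‖ ^ 2 := by
  rw [hT.inner_map_self_eq_sum hb, ← b.sum_sq_inner_right, Finset.mul_sum]
  refine Finset.sum_le_sum fun j _ => ?_
  by_cases hj : j ∈ s
  · exact mul_le_mul_of_nonneg_right (hs j hj) (sq_nonneg _)
  · simp [b.mem_spanSubset_iff.mp hx j hj]

end

section

variable {E : Type*} [NormedAddCommGroup E] [InnerProductSpace ℝ E] [FiniteDimensional ℝ E]
  {n : ℕ} {T : E →ₗ[ℝ] E} {b : OrthonormalBasis (Fin n) ℝ E} {μ : Fin n → ℝ}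

theorem le_of_forall_inner_map_self_le (hT : T.IsSymmetric) (hb : ∀ j, T (b j) = μ j • b j)
    (hμ : Monotone μ) {W : Submodule ℝ E} {i : Fin n} (hW : i < finrank ℝ W) {c : ℝ}
    (hc : ∀ x ∈ W, ⟪x, T x⟫ ≤ c * ‖x‖ ^ 2) : μ i ≤ c := by
  refine Submodule.le_of_bounds_of_finrank_lt_add (V := b.spanSubset (Finset.Ici i)) ?_
    (fun x hx => hT.mul_norm_sq_le_inner_map_self hb (fun j hj => hμ (Finset.mem_Ici.mp hj)) hx) hc
  rw [b.finrank_spanSubset, Fin.card_Ici, finrank_eq_card_basis b.toBasis, Fintype.card_fin]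
  omega

theorem le_of_forall_le_inner_map_self (hT : T.IsSymmetric) (hb : ∀ j, T (b j) = μ j • b j)
    (hμ : Monotone μ) {W : Submodule ℝ E} {i : Fin n} (hW : n ≤ finrank ℝ W + i) {c : ℝ}
    (hc : ∀ x ∈ W, c * ‖x‖ ^ 2 ≤ ⟪x, T x⟫) : c ≤ μ i := by
  refine Submodule.le_of_bounds_of_finrank_lt_add (W := b.spanSubset (Finset.Iic i)) ?_ hc
    (fun x hx => hT.inner_map_self_le_mul_norm_sq hb (fun j hj => hμ (Finset.mem_Iic.mp hj)) hx)
  rw [b.finrank_spanSubset, Fin.card_Iic, finrank_eq_card_basis b.toBasis, Fintype.card_fin]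
  omega

end

end LinearMap.IsSymmetric

namespace Matrix.IsHermitian

variable {n : ℕ} {A : Matrix (Fin n) (Fin n) ℝ}

theorem exists_orthonormalBasis_toEuclideanLin_eq_sortedEig_smul (hA : A.IsHermitian) :
    ∃ b : OrthonormalBasis (Fin n) ℝ (EuclideanSpace ℝ (Fin n)),
      ∀ j, toEuclideanLin A (b j) = sortedEig hA j • b j := by
  refine ⟨hA.eigenvectorBasis.reindex (Tuple.sort hA.eigenvalues).symm, fun j => ?_⟩
  rw [OrthonormalBasis.reindex_apply, Equiv.symm_symm]
  exact WithLp.ofLp_injective 2 (hA.mulVec_eigenvectorBasis _)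

theorem sortedEig_le_of_forall_inner_le (hA : A.IsHermitian)
    {W : Submodule ℝ (EuclideanSpace ℝ (Fin n))} {i : Fin n} (hW : i < finrank ℝ W) {c : ℝ}
    (hc : ∀ w ∈ W, ⟪w, toEuclideanLin A w⟫ ≤ c * ‖w‖ ^ 2) : sortedEig hA i ≤ c := by
  obtain ⟨b, hb⟩ := hA.exists_orthonormalBasis_toEuclideanLin_eq_sortedEig_smul
  exact (isSymmetric_toEuclideanLin_iff.mpr hA).le_of_forall_inner_map_self_le hb
    (Tuple.monotone_sort _) hW hc

theorem le_sortedEig_of_forall_le_inner (hA : A.IsHermitian)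
    {W : Submodule ℝ (EuclideanSpace ℝ (Fin n))} {i : Fin n} (hW : n ≤ finrank ℝ W + i)
    {c : ℝ} (hc : ∀ w ∈ W, c * ‖w‖ ^ 2 ≤ ⟪w, toEuclideanLin A w⟫) : c ≤ sortedEig hA i := by
  obtain ⟨b, hb⟩ := hA.exists_orthonormalBasis_toEuclideanLin_eq_sortedEig_smul
  exact (isSymmetric_toEuclideanLin_iff.mpr hA).le_of_forall_le_inner_map_self hb
    (Tuple.monotone_sort _) hW hc

end Matrix.IsHermitian

section

variable {ι : Type*} [Fintype ι] [DecidableEq ι]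

theorem Matrix.toEuclideanLin_diagonal_basisFun (a : ι → ℝ) (j : ι) :
    toEuclideanLin (diagonal a) (EuclideanSpace.basisFun ι ℝ j)
      = a j • EuclideanSpace.basisFun ι ℝ j := by
  ext k
  simp [EuclideanSpace.basisFun_apply, Pi.single_apply]

theorem Matrix.inner_toEuclideanLin_vecMulVec_self (y : ι → ℝ) (w : EuclideanSpace ℝ ι) :
    ⟪w, toEuclideanLin (vecMulVec y y) w⟫ = ⟪WithLp.toLp 2 y, w⟫ ^ 2 := by
  simp [EuclideanSpace.inner_eq_star_dotProduct, toLpLin_apply, vecMulVec_mulVec, sq,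
    dotProduct_comm]

theorem inner_toEuclideanLin_hessian (a x : ι → ℝ) (t e : ℝ) (w : EuclideanSpace ℝ ι) :
    ⟪w, toEuclideanLin (fun i j => a i * (if i = j then (1:ℝ) else 0) * t
        + a i * a j * x i * x j * e) w⟫
      = t * ⟪w, toEuclideanLin (diagonal a) w⟫ + e * ⟪WithLp.toLp 2 (a * x), w⟫ ^ 2 := by
  have hM : (fun i j => a i * (if i = j then (1:ℝ) else 0) * t + a i * a j * x i * x j * e :
      Matrix ι ι ℝ) = t • diagonal a + e • vecMulVec (a * x) (a * x) := by
    ext i j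
    simp only [Matrix.add_apply, Matrix.smul_apply, diagonal_apply, vecMulVec_apply, Pi.mul_apply,
      smul_eq_mul]
    split_ifs <;> ring
  rw [hM, map_add, map_smul, map_smul, LinearMap.add_apply, LinearMap.smul_apply,
    LinearMap.smul_apply, inner_add_right, real_inner_smul_right, real_inner_smul_right,
    inner_toEuclideanLin_vecMulVec_self]

end

theorem eigenvalue_bounds_subsolution_case_general {n : ℕ} (a : Fin n → ℝ)
    (hamono : Monotone a)
    (u : ℝ → ℝ) (x : Fin n → ℝ)
    (s : ℝ)
    (hu' : 0 < deriv u s) (hu'' : deriv (deriv u) s ≤ 0)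
    (M : Matrix (Fin n) (Fin n) ℝ)
    (hM : M = fun i j => a i * (if i = j then (1:ℝ) else 0) * deriv u s
        + a i * a j * x i * x j * deriv (deriv u) s)
    (hMH : M.IsHermitian) (i : Fin n) :
    a i * deriv u s + (∑ k, (a k) ^ 2 * (x k) ^ 2) * deriv (deriv u) s
        ≤ sortedEig hMH i ∧ sortedEig hMH i ≤ a i * deriv u s := by
  set D := toEuclideanLin (diagonal a)
  set y := WithLp.toLp 2 (a * x)
  set b := EuclideanSpace.basisFun (Fin n) ℝ
  have hq (w) :
      ⟪w, toEuclideanLin M w⟫ = deriv u s * ⟪w, D w⟫ + deriv (deriv u) s * ⟪y, w⟫ ^ 2 := by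
    rw [hM]; exact inner_toEuclideanLin_hessian a x _ _ w
  have hy : ‖y‖ ^ 2 = ∑ k, a k ^ 2 * x k ^ 2 := by
    simp [y, EuclideanSpace.real_norm_sq_eq, mul_pow]
  have hD := isSymmetric_toEuclideanLin_iff.mpr (isHermitian_diagonal a)
  have hDb := toEuclideanLin_diagonal_basisFun a
  constructor
  · refine hMH.le_sortedEig_of_forall_le_inner (W := b.spanSubset (Finset.Ici i)) ?_ fun w hw => ?_
    · rw [b.finrank_spanSubset, Fin.card_Ici]; omega
    have hDw : a i * ‖w‖ ^ 2 ≤ ⟪w, D w⟫ :=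
      hD.mul_norm_sq_le_inner_map_self hDb (fun j hj => hamono (Finset.mem_Ici.mp hj)) hw
    have hyw : ⟪y, w⟫ ^ 2 ≤ ‖y‖ ^ 2 * ‖w‖ ^ 2 := by
      simpa [mul_pow, sq_abs] using pow_le_pow_left₀ (abs_nonneg _) (abs_real_inner_le_norm y w) 2
    rw [hq, ← hy]
    linarith [mul_le_mul_of_nonneg_left hDw hu'.le, mul_le_mul_of_nonpos_left hyw hu'']
  · refine hMH.sortedEig_le_of_forall_inner_le (W := b.spanSubset (Finset.Iic i)) ?_ fun w hw => ?_
    · rw [b.finrank_spanSubset, Fin.card_Iic]; omega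
    have hDw : ⟪w, D w⟫ ≤ a i * ‖w‖ ^ 2 :=
      hD.inner_map_self_le_mul_norm_sq hDb (fun j hj => hamono (Finset.mem_Iic.mp hj)) hw
    rw [hq]
    linarith [mul_le_mul_of_nonneg_left hDw hu'.le,
      mul_nonpos_of_nonpos_of_nonneg hu'' (sq_nonneg ⟪y, w⟫)]

/-- If `U(x) = u(s)`, `s = (1/2)∑ᵢ aᵢxᵢ²`, `0 < a₁ ≤ … ≤ aₙ`, `u'(s) > 0` and
`u''(s) ≤ 0`, then the `i`-th smallest eigenvalue of the Hessian `D²U(x)`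
(whose entries are `aᵢδᵢⱼu'(s) + aᵢaⱼxᵢxⱼu''(s)`) satisfies
`aᵢu'(s) + (∑ⱼ aⱼ²xⱼ²) u''(s) ≤ λᵢ(D²U(x)) ≤ aᵢu'(s)`. -/
theorem eigenvalue_bounds_subsolution_case {n : ℕ} (a : Fin n → ℝ)
    (ha : ∀ i, 0 < a i) (hamono : Monotone a)
    (u : ℝ → ℝ) (hu : ContDiff ℝ 2 u) (x : Fin n → ℝ)
    (s : ℝ) (hs : s = (1/2) * ∑ k, a k * x k ^ 2)
    (hu' : 0 < deriv u s) (hu'' : deriv (deriv u) s ≤ 0)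
    (M : Matrix (Fin n) (Fin n) ℝ)
    (hM : M = fun i j => a i * (if i = j then (1:ℝ) else 0) * deriv u s
        + a i * a j * x i * x j * deriv (deriv u) s)
    (hMH : M.IsHermitian) (i : Fin n) :
    a i * deriv u s + (∑ k, (a k) ^ 2 * (x k) ^ 2) * deriv (deriv u) s
        ≤ sortedEig hMH i ∧ sortedEig hMH i ≤ a i * deriv u s :=
  eigenvalue_bounds_subsolution_case_general a hamono u x s hu' hu'' M hM hMH i
end

section
/- Let Γ ⊂ ℝⁿ be an open convex symmetric cone with vertex at the origin containing the positive cone Γ⁺ = {λ : λᵢ > 0 for all i}. Then Γ is contained in the half-space Γ₁ = {λ ∈ ℝⁿ : ∑ᵢ λᵢ > 0}. -/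
/-! Averaging a point `v ∈ Γ` over all coordinate permutations stays in `Γ` by symmetry and
convexity and gives the constant vector with entries `(∑ᵢ vᵢ) / n`. If `∑ᵢ vᵢ ≤ 0`, openness
then puts a constant vector with negative entries in `Γ`. A convex cone containing such a vector
and the positive cone is all of `ℝⁿ`, contradicting properness. -/

section

variable {ι : Type*} [Fintype ι]

theorem sum_perm_apply_eq [DecidableEq ι] (v : ι → ℝ) (i j : ι) :
    ∑ σ : Equiv.Perm ι, v (σ i) = ∑ σ : Equiv.Perm ι, v (σ j) :=
  Fintype.sum_equiv (Equiv.mulRight (Equiv.swap i j)) _ _ fun σ => by simp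

theorem sum_perm_apply [DecidableEq ι] (v : ι → ℝ) (i : ι) :
    ∑ σ : Equiv.Perm ι, v (σ i) =
      (Fintype.card (Equiv.Perm ι) / Fintype.card ι : ℝ) * ∑ j, v j := by
  have hcard : (0 : ℝ) < Fintype.card ι := Nat.cast_pos.mpr (Fintype.card_pos_iff.mpr ⟨i⟩)
  have htotal : ∑ j, ∑ σ : Equiv.Perm ι, v (σ j) = Fintype.card (Equiv.Perm ι) * ∑ j, v j := by
    rw [Finset.sum_comm]
    simp [Equiv.sum_comp]
  have hconst :
      ∑ j, ∑ σ : Equiv.Perm ι, v (σ j) = Fintype.card ι * ∑ σ : Equiv.Perm ι, v (σ i) := by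
    simp [sum_perm_apply_eq v _ i]
  field_simp
  linarith

theorem Convex.const_mean_mem [DecidableEq ι] {S : Set (ι → ℝ)} (hconv : Convex ℝ S)
    (hsym : ∀ σ : Equiv.Perm ι, ∀ v ∈ S, v ∘ σ ∈ S) {v : ι → ℝ} (hv : v ∈ S) :
    Function.const ι ((∑ i, v i) / Fintype.card ι) ∈ S := by
  have hk : (0 : ℝ) < Fintype.card (Equiv.Perm ι) := Nat.cast_pos.mpr Fintype.card_pos
  have haverage : ∑ σ : Equiv.Perm ι, (Fintype.card (Equiv.Perm ι) : ℝ)⁻¹ • (v ∘ σ) =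
      Function.const ι ((∑ i, v i) / Fintype.card ι) := by
    ext i
    simp only [Finset.sum_apply, Pi.smul_apply, Function.comp_apply, smul_eq_mul, ← Finset.mul_sum,
      sum_perm_apply v i, Function.const_apply]
    field_simp
  rw [← haverage]
  refine hconv.sum_mem (fun _ _ => by positivity) ?_ fun σ _ => hsym σ v hv
  simp [hk.ne']

end

theorem IsOpen.exists_lt_const_mem {ι : Type*} {U : Set (ι → ℝ)} (hU : IsOpen U) {a : ℝ}
    (ha : Function.const ι a ∈ U) : ∃ b < a, Function.const ι b ∈ U := by
  have hnhds : ∀ᶠ t in nhds a, Function.const ι t ∈ U :=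
    (hU.preimage (continuous_pi fun _ => continuous_id)).mem_nhds ha
  obtain ⟨b, hbU, hb⟩ := ((hnhds.filter_mono nhdsWithin_le_nhds).and
    (self_mem_nhdsWithin (s := Set.Iio a))).exists
  exact ⟨b, hb, hbU⟩

theorem eq_univ_of_const_neg_mem {ι : Type*} [Fintype ι] {Γ : Set (ι → ℝ)} (hconv : Convex ℝ Γ)
    (hcone : ∀ t : ℝ, 0 < t → ∀ v ∈ Γ, t • v ∈ Γ) (hpos : {v : ι → ℝ | ∀ i, 0 < v i} ⊆ Γ)
    {b : ℝ} (hb : b < 0) (hbΓ : Function.const ι b ∈ Γ) : Γ = Set.univ := by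
  refine Set.eq_univ_of_forall fun u => ?_
  set M := 2 * ‖u‖ + 1
  have hneg : Function.const ι (-M) ∈ Γ := by
    convert hcone (M / -b) (div_pos (by positivity) (neg_pos.mpr hb)) _ hbΓ using 1
    ext
    simp [field, div_self hb.ne]
  -- `2u + M` has positive entries since `|uᵢ| ≤ ‖u‖`, and `u` is the midpoint of it and `-M`.
  have hshift : (2 : ℝ) • u + Function.const ι M ∈ Γ := by
    refine hpos fun i => ?_
    have hui := neg_le_of_abs_le ((Real.norm_eq_abs _).symm.trans_le (norm_le_pi_norm u i))
    simp only [Pi.add_apply, Pi.smul_apply, Function.const_apply, smul_eq_mul]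
    linarith
  convert hconv hshift hneg (by norm_num : (0 : ℝ) ≤ 1 / 2) (by norm_num : (0 : ℝ) ≤ 1 / 2)
    (by norm_num) using 1
  ext
  simp

/-- An open convex symmetric proper cone `Γ ⊂ ℝⁿ` with vertex at the origin
containing the positive cone `Γ⁺` is contained in the half-space
`Γ₁ = {λ : ∑ᵢ λᵢ > 0}`. -/
theorem cone_subset_halfspace {n : ℕ} (Γ : Set (Fin n → ℝ))
    (hopen : IsOpen Γ) (hconv : Convex ℝ Γ)
    (hsym : ∀ σ : Equiv.Perm (Fin n), ∀ v ∈ Γ, (v ∘ σ) ∈ Γ)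
    (hcone : ∀ t : ℝ, 0 < t → ∀ v ∈ Γ, t • v ∈ Γ)
    (hpos : {v : Fin n → ℝ | ∀ i, 0 < v i} ⊆ Γ)
    (hproper : Γ ≠ Set.univ) :
    Γ ⊆ {v : Fin n → ℝ | 0 < ∑ i, v i} := by
  intro v hv
  by_contra hsum
  -- for `n = 0` the mean is `0 / 0 = 0`
  have hmean : (∑ i, v i) / Fintype.card (Fin n) ≤ 0 :=
    div_nonpos_of_nonpos_of_nonneg (not_lt.mp hsum) (Nat.cast_nonneg _)
  obtain ⟨b, hb, hbΓ⟩ := hopen.exists_lt_const_mem (hconv.const_mean_mem hsym hv)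
  exact hproper (eq_univ_of_const_neg_mem hconv hcone hpos (hb.trans_le hmean) hbΓ)
end

section
/- Let f : Γ → ℝ be C¹ on an open convex symmetric cone Γ ⊃ Γ⁺, with ∂f/∂λᵢ > 0 on Γ, satisfying λ·∇f(λ) ≥ ν(f(λ)) for a positive increasing ν, and satisfying limsup_{λ→λ₀} f(λ) < r for every λ₀ ∈ ∂Γ, where r > 0 is given. Then for every λ ∈ Γ, there exists a unique t₁ > 0 such that f(t₁λ) = r. -/
/-!
Along a ray `t ↦ t • v` the Euler-type inequality gives `t · (d/dt) f (t • v) ≥ ν (f (t • v)) > 0`,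
so `f` is strictly increasing on the ray, and since `ν (f (t • v)) ≥ ν (f v)` for `t ≥ 1` it grows
at least like `ν (f v) · log t`. Near the apex `0 ∈ ∂Γ` the boundary condition keeps `f` below `r`;
it applies because `f` is bounded above near `0`: positive partial derivatives give
`f w ≤ f (w + (1, …, 1))`, and `w + (1, …, 1)` stays in a compact box inside the positive cone.
The intermediate value theorem and strict monotonicity then give exactly one crossing of the level `r`.
-/

open Filter Set Real Topology

theorem existsUnique_pos_eq_of_strictMonoOn {g : ℝ → ℝ} {r : ℝ}
    (hmono : StrictMonoOn g (Ioi 0)) (hcont : ContinuousOn g (Ioi 0))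
    (hsmall : ∀ᶠ t in 𝓝[>] 0, g t < r) (hlarge : Tendsto g atTop atTop) :
    ∃! t, 0 < t ∧ g t = r := by
  obtain ⟨t₀, ht₀r, ht₀⟩ := (hsmall.and self_mem_nhdsWithin).exists
  obtain ⟨T, hrT, hT⟩ := ((hlarge.eventually_ge_atTop r).and (eventually_ge_atTop t₀)).exists
  obtain ⟨t, ht, hgt⟩ := intermediate_value_Icc hT
    (hcont.mono fun s hs => lt_of_lt_of_le ht₀ hs.1) ⟨ht₀r.le, hrT⟩
  have ht_pos : 0 < t := ht₀.trans_le ht.1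
  exact ⟨t, ⟨ht_pos, hgt⟩, fun s hs => hmono.injOn hs.1 ht_pos (hs.2.trans hgt.symm)⟩

/-- Comparison with `g 1 + c · log t`, whose derivative is `c / t`. -/
theorem tendsto_atTop_of_le_mul_deriv {g g' : ℝ → ℝ} {c : ℝ} (hc : 0 < c)
    (hg : ∀ t, 1 ≤ t → HasDerivAt g (g' t) t) (hcg : ∀ t, 1 ≤ t → c ≤ t * g' t) :
    Tendsto g atTop atTop := by
  have hderiv : ∀ t, 1 ≤ t →
      HasDerivAt (fun t => g t - c * log t) (g' t - c * t⁻¹) t := fun t ht =>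
    (hg t ht).sub ((hasDerivAt_log (by positivity)).const_mul c)
  have hmono : MonotoneOn (fun t => g t - c * log t) (Ici 1) := by
    refine monotoneOn_of_deriv_nonneg (convex_Ici 1)
      (fun t ht => (hderiv t ht).continuousAt.continuousWithinAt) ?_ ?_ <;> rw [interior_Ici]
    · exact fun t ht => (hderiv t ht.le).differentiableAt.differentiableWithinAt
    · intro t ht
      have ht0 : 0 < t := zero_lt_one.trans ht
      rw [(hderiv t ht.le).deriv, sub_nonneg, ← div_eq_mul_inv, div_le_iff₀ ht0]
      linarith [hcg t ht.le]
  have hlog : Tendsto (fun t => (g 1 - c * log 1) + c * log t) atTop atTop :=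
    tendsto_atTop_add_const_left _ _ (tendsto_log_atTop.const_mul_atTop hc)
  refine tendsto_atTop_mono' _ ?_ hlog
  filter_upwards [eventually_ge_atTop 1] with t ht
  linarith [hmono self_mem_Ici ht ht]

section Ray

variable {E : Type*} [NormedAddCommGroup E] [NormedSpace ℝ E] {f : E → ℝ}

theorem hasDerivAt_apply_smul {v : E} {t : ℝ} (hf : DifferentiableAt ℝ f (t • v)) :
    HasDerivAt (fun s : ℝ => f (s • v)) (fderiv ℝ f (t • v) v) t :=
  hf.hasFDerivAt.comp_hasDerivAt t (by simpa using (hasDerivAt_id t).smul_const v)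

theorem hasDerivAt_apply_add_smul {w u : E} {s : ℝ} (hf : DifferentiableAt ℝ f (w + s • u)) :
    HasDerivAt (fun s : ℝ => f (w + s • u)) (fderiv ℝ f (w + s • u) u) s :=
  hf.hasFDerivAt.comp_hasDerivAt s (by simpa using ((hasDerivAt_id s).smul_const u).const_add w)

theorem strictMonoOn_apply_smul {v : E} (hdiff : ∀ t : ℝ, 0 < t → DifferentiableAt ℝ f (t • v))
    (hpos : ∀ t : ℝ, 0 < t → 0 < fderiv ℝ f (t • v) (t • v)) :
    StrictMonoOn (fun t : ℝ => f (t • v)) (Ioi 0) := by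
  refine strictMonoOn_of_deriv_pos (convex_Ioi 0)
    (fun t ht => (hasDerivAt_apply_smul (hdiff t ht)).continuousAt.continuousWithinAt)
    fun t ht => ?_
  rw [interior_Ioi] at ht
  rw [(hasDerivAt_apply_smul (hdiff t ht)).deriv]
  have h := hpos t ht
  rw [map_smul, smul_eq_mul] at h
  exact pos_of_mul_pos_right h ht.le

theorem tendsto_apply_smul_atTop {v : E} {ν : ℝ → ℝ} (hν : ∀ x, 0 < ν x) (hνmono : Monotone ν)
    (hdiff : ∀ t : ℝ, 0 < t → DifferentiableAt ℝ f (t • v))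
    (hstruct : ∀ t : ℝ, 0 < t → ν (f (t • v)) ≤ fderiv ℝ f (t • v) (t • v)) :
    Tendsto (fun t : ℝ => f (t • v)) atTop atTop := by
  have hmono := strictMonoOn_apply_smul hdiff fun t ht => (hν _).trans_le (hstruct t ht)
  refine tendsto_atTop_of_le_mul_deriv (hν (f v))
    (fun t ht => hasDerivAt_apply_smul (hdiff t (by linarith))) fun t ht => ?_
  have ht0 : (0 : ℝ) < t := by linarith
  have hft : f v ≤ f (t • v) := by
    simpa using hmono.monotoneOn (mem_Ioi.2 one_pos) (mem_Ioi.2 ht0) ht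
  rw [← smul_eq_mul, ← map_smul]
  exact (hνmono hft).trans (hstruct t ht0)

theorem le_apply_add_of_fderiv_nonneg {w u : E}
    (hdiff : ∀ s ∈ Icc (0 : ℝ) 1, DifferentiableAt ℝ f (w + s • u))
    (hnonneg : ∀ s ∈ Icc (0 : ℝ) 1, 0 ≤ fderiv ℝ f (w + s • u) u) :
    f w ≤ f (w + u) := by
  have hderiv := fun s hs => hasDerivAt_apply_add_smul (hdiff s hs)
  have hmono : MonotoneOn (fun s : ℝ => f (w + s • u)) (Icc 0 1) :=
    monotoneOn_of_deriv_nonneg (convex_Icc 0 1)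
      (fun s hs => (hderiv s hs).continuousAt.continuousWithinAt)
      (fun s hs => (hderiv s (interior_subset hs)).differentiableAt.differentiableWithinAt)
      fun s hs => (hderiv s (interior_subset hs)).deriv ▸ hnonneg s (interior_subset hs)
  simpa using hmono (left_mem_Icc.2 zero_le_one) (right_mem_Icc.2 zero_le_one) zero_le_one

end Ray

section Cone

variable {E : Type*} [NormedAddCommGroup E] [NormedSpace ℝ E] {Γ : Set E}

theorem Convex.add_mem_of_smul_mem (hconv : Convex ℝ Γ)
    (hcone : ∀ t : ℝ, 0 < t → ∀ v ∈ Γ, t • v ∈ Γ) {a b : E} (ha : a ∈ Γ) (hb : b ∈ Γ) :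
    a + b ∈ Γ := by
  have hmid := hconv ha hb (by norm_num : (0 : ℝ) ≤ 1 / 2) (by norm_num : (0 : ℝ) ≤ 1 / 2)
    (by norm_num)
  convert hcone 2 two_pos _ hmid using 1
  module

theorem tendsto_smul_nhdsWithin_zero (hcone : ∀ t : ℝ, 0 < t → ∀ v ∈ Γ, t • v ∈ Γ) {v : E}
    (hv : v ∈ Γ) : Tendsto (fun t : ℝ => t • v) (𝓝[>] 0) (𝓝[Γ] 0) := by
  refine tendsto_nhdsWithin_iff.2 ⟨?_, eventually_mem_nhdsWithin.mono fun t ht => hcone t ht v hv⟩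
  simpa using ((tendsto_id (x := 𝓝 (0 : ℝ))).smul_const v).mono_left nhdsWithin_le_nhds

end Cone

theorem isBoundedUnder_le_nhdsWithin_zero {n : ℕ} {Γ : Set (Fin n → ℝ)} {f : (Fin n → ℝ) → ℝ}
    (hconv : Convex ℝ Γ) (hcone : ∀ t : ℝ, 0 < t → ∀ v ∈ Γ, t • v ∈ Γ)
    (hpos : {v : Fin n → ℝ | ∀ i, 0 < v i} ⊆ Γ) (hdiff : ∀ w ∈ Γ, DifferentiableAt ℝ f w)
    (hderiv : ∀ w ∈ Γ, ∀ i, 0 < fderiv ℝ f w (Pi.single i 1)) :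
    IsBoundedUnder (· ≤ ·) (𝓝[Γ] 0) f := by
  set e : Fin n → ℝ := fun _ => 1
  have hbox : Icc (fun _ => (1 / 2 : ℝ)) (fun _ => 3 / 2) ⊆ Γ := fun w hw =>
    hpos fun i => lt_of_lt_of_le (by norm_num) (hw.1 i)
  have hcont : ContinuousOn f Γ := fun w hw => (hdiff w hw).continuousAt.continuousWithinAt
  obtain ⟨M, hM⟩ := (isCompact_Icc.image_of_continuousOn (hcont.mono hbox)).bddAbove
  have hdir : ∀ x ∈ Γ, 0 ≤ fderiv ℝ f x e := fun x hx => by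
    rw [← Finset.univ_sum_single e, map_sum]
    exact Finset.sum_nonneg fun i _ => (hderiv x hx i).le
  have hle : ∀ w ∈ Γ, f w ≤ f (w + e) := by
    intro w hw
    have hseg : ∀ s ∈ Icc (0 : ℝ) 1, w + s • e ∈ Γ := fun s hs =>
      hconv.add_smul_mem hw (hconv.add_mem_of_smul_mem hcone hw (hpos fun _ => one_pos)) hs
    exact le_apply_add_of_fderiv_nonneg (fun s hs => hdiff _ (hseg s hs))
      fun s hs => hdir _ (hseg s hs)
  refine ⟨M, eventually_map.2 ?_⟩
  filter_upwards [nhdsWithin_le_nhds (Metric.ball_mem_nhds 0 (by norm_num : (0 : ℝ) < 1 / 2)),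
    self_mem_nhdsWithin] with w hw hwΓ
  refine (hle w hwΓ).trans (hM ⟨w + e, ⟨fun i => ?_, fun i => ?_⟩, rfl⟩) <;>
  · have hwi := abs_lt.1 ((norm_le_pi_norm w i).trans_lt (mem_ball_zero_iff.1 hw))
    simp only [Pi.add_apply, e]
    linarith [hwi.1, hwi.2]

theorem exists_unique_ray_level_general {n : ℕ} (Γ : Set (Fin n → ℝ))
    (hopen : IsOpen Γ) (hconv : Convex ℝ Γ)
    (hcone : ∀ t : ℝ, 0 < t → ∀ v ∈ Γ, t • v ∈ Γ)
    (hpos : {v : Fin n → ℝ | ∀ i, 0 < v i} ⊆ Γ)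
    (f : (Fin n → ℝ) → ℝ) (hf : ContDiffOn ℝ 1 f Γ)
    (hderiv : ∀ v ∈ Γ, ∀ i, 0 < fderiv ℝ f v (Pi.single i 1))
    (ν : ℝ → ℝ) (hν : ∀ t, 0 < ν t) (hνmono : Monotone ν)
    (hstruct : ∀ v ∈ Γ, ν (f v) ≤ fderiv ℝ f v v)
    (r : ℝ)
    (hbdry : ∀ v₀ ∈ frontier Γ, limsup f (nhdsWithin v₀ Γ) < r) :
    ∀ v ∈ Γ, ∃! t₁ : ℝ, 0 < t₁ ∧ f (t₁ • v) = r := by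
  intro v hv
  have hdiff : ∀ w ∈ Γ, DifferentiableAt ℝ f w := fun w hw =>
    (hf.differentiableOn one_ne_zero).differentiableAt (hopen.mem_nhds hw)
  have hray_diff : ∀ t : ℝ, 0 < t → DifferentiableAt ℝ f (t • v) := fun t ht =>
    hdiff _ (hcone t ht v hv)
  have hzero : (0 : Fin n → ℝ) ∉ Γ := fun h0 => by simpa using (hν _).trans_le (hstruct 0 h0)
  have hray := tendsto_smul_nhdsWithin_zero hcone hv
  have hzero_frontier : (0 : Fin n → ℝ) ∈ frontier Γ :=
    ⟨mem_closure_iff_nhdsWithin_neBot.2 hray.neBot, by rwa [hopen.interior_eq]⟩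
  have hsmall : ∀ᶠ w in 𝓝[Γ] 0, f w < r := eventually_lt_of_limsup_lt (hbdry 0 hzero_frontier)
    (isBoundedUnder_le_nhdsWithin_zero hconv hcone hpos hdiff hderiv)
  exact existsUnique_pos_eq_of_strictMonoOn
    (strictMonoOn_apply_smul hray_diff fun t ht => (hν _).trans_le (hstruct _ (hcone t ht v hv)))
    (fun t ht => (hasDerivAt_apply_smul (hray_diff t ht)).continuousAt.continuousWithinAt)
    (hray.eventually hsmall)
    (tendsto_apply_smul_atTop hν hνmono hray_diff fun t ht => hstruct _ (hcone t ht v hv))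

/-- If `f` is `C¹` on an open convex symmetric cone `Γ ⊃ Γ⁺` with positive partial
derivatives, satisfies `λ·∇f(λ) ≥ ν(f(λ))` for a positive increasing `ν`, and
`limsup_{λ→λ₀} f(λ) < r` for every boundary point `λ₀` of `Γ`, then for every
`λ ∈ Γ` there is a unique `t₁ > 0` with `f(t₁λ) = r`. -/
theorem exists_unique_ray_level {n : ℕ} (Γ : Set (Fin n → ℝ))
    (hopen : IsOpen Γ) (hconv : Convex ℝ Γ)
    (hsym : ∀ σ : Equiv.Perm (Fin n), ∀ v ∈ Γ, (v ∘ σ) ∈ Γ)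
    (hcone : ∀ t : ℝ, 0 < t → ∀ v ∈ Γ, t • v ∈ Γ)
    (hpos : {v : Fin n → ℝ | ∀ i, 0 < v i} ⊆ Γ)
    (f : (Fin n → ℝ) → ℝ) (hf : ContDiffOn ℝ 1 f Γ)
    (hderiv : ∀ v ∈ Γ, ∀ i, 0 < fderiv ℝ f v (Pi.single i 1))
    (ν : ℝ → ℝ) (hν : ∀ t, 0 < ν t) (hνmono : Monotone ν)
    (hstruct : ∀ v ∈ Γ, ν (f v) ≤ fderiv ℝ f v v)
    (r : ℝ) (hr : 0 < r)
    (hbdry : ∀ v₀ ∈ frontier Γ, limsup f (nhdsWithin v₀ Γ) < r) :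
    ∀ v ∈ Γ, ∃! t₁ : ℝ, 0 < t₁ ∧ f (t₁ • v) = r :=
  exists_unique_ray_level_general Γ hopen hconv hcone hpos f hf hderiv ν hν hνmono hstruct r hbdry
end

section
/- Let f be C¹ on an open convex symmetric cone Γ ⊃ Γ⁺ with all ∂f/∂λᵢ > 0, let a = (a₁,…,aₙ) ∈ Γ⁺ with a₁ ≤ … ≤ aₙ, and let δ > 0. Suppose u : (0,∞) → ℝ is C² with u' > 0, u'' ≥ 0, lim_{s→∞} u'(s) = 1 and lim_{s→∞} s·u''(s) = 0, and set s = (1/2)∑aᵢxᵢ², U(x) = ∑ⱼaⱼ²xⱼ². Assume the eigenvalues of D²u satisfy λᵢ = aᵢu' + θᵢUu'' with θᵢ ∈ (0,1), ∑θᵢ = 1, and that ∂f/∂λ₁(a) ≥ ∂f/∂λᵢ(a) for all i. Then there exists s̄ > 0 (depending on f, a, δ, u', u'') such that for all s > s̄: f(λ(D²u)) ≤ f(a₁u' + (2aₙ+δ)su'', a₂u', …, aₙu'), provided both vectors lie in Γ. -/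
open Filter Metric Topology

/-!
Both vectors tend to `a` as `s → ∞`, because `u' → 1`, `s u'' → 0` and `U ≤ 2 aₙ s`; so for large
`s` the whole segment between them lies in a ball around `a` on which every partial derivative of
`f` is within `ε` of its value at `a`. By the mean value theorem it suffices that the derivative
of `f` in the direction `w - v = u'' (e₁ (2aₙ + δ) s - U θ)` is nonnegative along the segment. The
first partial is at least `∂₁f(a) - ε` and the `θ`-average of the partials is at most
`∂₁f(a) + ε`, so this holds once `U (∂₁f(a) + ε) ≤ (2aₙ + δ) s (∂₁f(a) - ε)`, and the margin
`δ s` pays for `ε = δ ∂₁f(a) / (4aₙ + δ)`.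
-/

theorem le_of_forall_mem_segment_fderiv_nonneg {E : Type*} [NormedAddCommGroup E]
    [NormedSpace ℝ E] {f : E → ℝ} {x y : E} (hf : ∀ z ∈ segment ℝ x y, DifferentiableAt ℝ f z)
    (h : ∀ z ∈ segment ℝ x y, 0 ≤ fderiv ℝ f z (y - x)) : f x ≤ f y := by
  obtain ⟨z, hz, hxy⟩ := domain_mvt (fun z hz => (hf z hz).hasFDerivAt.hasFDerivWithinAt)
    (convex_segment x y) (left_mem_segment ℝ x y) (right_mem_segment ℝ x y)
  linarith [h z hz]

section Coordinates

variable {ι : Type*} [Fintype ι]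

theorem mem_ball_of_abs_sub_mul_le {a v : ι → ℝ} {m d B r : ℝ} (hr : 0 < r)
    (ha : ∀ i, |a i| ≤ m) (hv : ∀ i, |v i - a i * d| ≤ B) (hlt : m * |d - 1| + B < r) :
    v ∈ ball a r := by
  rw [mem_ball, dist_pi_lt_iff hr]
  intro i
  rw [Real.dist_eq]
  calc |v i - a i| = |(v i - a i * d) + a i * (d - 1)| := by ring_nf
    _ ≤ B + m * |d - 1| := (abs_add_le _ _).trans <| by
        rw [abs_mul]
        exact add_le_add (hv i) (mul_le_mul_of_nonneg_right (ha i) (abs_nonneg _))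
    _ < r := by linarith

theorem sum_sq_mul_sq_le {a x : ι → ℝ} {m : ℝ} (ha : ∀ i, 0 ≤ a i) (ham : ∀ i, a i ≤ m) :
    ∑ i, a i ^ 2 * x i ^ 2 ≤ m * ∑ i, a i * x i ^ 2 := by
  rw [Finset.mul_sum]
  exact Finset.sum_le_sum fun i _ => by
    nlinarith [mul_le_mul_of_nonneg_right (ham i) (mul_nonneg (ha i) (sq_nonneg (x i)))]

variable [DecidableEq ι]

theorem abs_sub_apply_single_le_opNorm (L M : (ι → ℝ) →L[ℝ] ℝ) (i : ι) :
    |L (Pi.single i 1) - M (Pi.single i 1)| ≤ ‖L - M‖ := by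
  simpa [Real.norm_eq_abs, Pi.norm_single] using (L - M).le_opNorm (Pi.single i 1)

theorem apply_eq_sum_mul_apply_single (L : (ι → ℝ) →L[ℝ] ℝ) (z : ι → ℝ) :
    L z = ∑ i, z i * L (Pi.single i 1) := by
  conv_lhs => rw [← Finset.univ_sum_single z]
  refine (map_sum L _ _).trans (Finset.sum_congr rfl fun i _ => ?_)
  rw [← smul_eq_mul, ← map_smul, ← Pi.single_smul', smul_eq_mul, mul_one]

theorem apply_single_sub_smul_nonneg (L : (ι → ℝ) →L[ℝ] ℝ) {θ : ι → ℝ} (hθ : ∀ i, 0 ≤ θ i)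
    (hθsum : ∑ i, θ i = 1) {i₀ : ι} {p ε A T : ℝ} (hup : ∀ i, L (Pi.single i 1) ≤ p + ε)
    (hlow : p - ε ≤ L (Pi.single i₀ 1)) (hA : 0 ≤ A) (hT : 0 ≤ T)
    (hTA : T * (p + ε) ≤ A * (p - ε)) :
    0 ≤ L (Pi.single i₀ A - T • θ) := by
  have hweighted : ∑ i, θ i * L (Pi.single i 1) ≤ p + ε :=
    calc ∑ i, θ i * L (Pi.single i 1) ≤ ∑ i, θ i * (p + ε) :=
          Finset.sum_le_sum fun i _ => mul_le_mul_of_nonneg_left (hup i) (hθ i)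
      _ = p + ε := by rw [← Finset.sum_mul, hθsum, one_mul]
  have hfirst : L (Pi.single i₀ A) = A * L (Pi.single i₀ 1) := by
    rw [← smul_eq_mul, ← map_smul, ← Pi.single_smul', smul_eq_mul, mul_one]
  rw [map_sub, map_smul, hfirst, apply_eq_sum_mul_apply_single L θ, smul_eq_mul]
  nlinarith [mul_le_mul_of_nonneg_left hlow hA, mul_le_mul_of_nonneg_left hweighted hT]

theorem exists_ball_abs_partial_sub_lt {Γ : Set (ι → ℝ)} (hΓ : IsOpen Γ) {f : (ι → ℝ) → ℝ}
    (hf : ContDiffOn ℝ 1 f Γ) {a : ι → ℝ} (ha : a ∈ Γ) {ε : ℝ} (hε : 0 < ε) :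
    ∃ r > 0, ∀ z ∈ ball a r, DifferentiableAt ℝ f z ∧
      ∀ i, |fderiv ℝ f z (Pi.single i 1) - fderiv ℝ f a (Pi.single i 1)| < ε := by
  have hdiff : ∀ᶠ z in 𝓝 a, DifferentiableAt ℝ f z :=
    (hΓ.eventually_mem ha).mono fun z hz =>
      (hf.differentiableOn one_ne_zero).differentiableAt (hΓ.mem_nhds hz)
  have hnear : ∀ᶠ z in 𝓝 a, dist (fderiv ℝ f z) (fderiv ℝ f a) < ε :=
    tendsto_nhds.mp ((hf.continuousOn_fderiv_of_isOpen hΓ le_rfl).continuousAt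
      (hΓ.mem_nhds ha)) ε hε
  obtain ⟨r, hr, hball⟩ := eventually_nhds_iff_ball.mp (hdiff.and hnear)
  refine ⟨r, hr, fun z hz => ⟨(hball z hz).1, fun i => ?_⟩⟩
  exact (abs_sub_apply_single_le_opNorm _ _ i).trans_lt
    ((dist_eq_norm _ _).symm.trans_lt (hball z hz).2)

theorem exists_ball_comparison {Γ : Set (ι → ℝ)} (hΓ : IsOpen Γ) {f : (ι → ℝ) → ℝ}
    (hf : ContDiffOn ℝ 1 f Γ) {a : ι → ℝ} (haΓ : a ∈ Γ) {i₀ : ι}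
    (hpos : 0 < fderiv ℝ f a (Pi.single i₀ 1))
    (hmax : ∀ i, fderiv ℝ f a (Pi.single i 1) ≤ fderiv ℝ f a (Pi.single i₀ 1))
    {m δ : ℝ} (ham : ∀ i, |a i| ≤ m) (hδ : 0 < δ) :
    ∃ r > 0, ∀ (d c S T : ℝ) (θ : ι → ℝ), 0 ≤ c → 0 ≤ S → 0 ≤ T → T ≤ 2 * m * S →
      (∀ i, 0 ≤ θ i) → ∑ i, θ i = 1 → m * |d - 1| + (2 * m + δ) * S * c < r →
      f (fun i => a i * d + θ i * (T * c)) ≤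
        f (fun i => if i = i₀ then a i * d + (2 * m + δ) * S * c else a i * d) := by
  set p := fderiv ℝ f a (Pi.single i₀ 1)
  have hm : 0 ≤ m := (abs_nonneg _).trans (ham i₀)
  set ε := δ * p / (4 * m + δ)
  have hε : 0 < ε := by positivity
  have hbalance : 2 * m * (p + ε) = (2 * m + δ) * (p - ε) := by
    simp only [ε]; field_simp; ring
  obtain ⟨r, hr, hball⟩ := exists_ball_abs_partial_sub_lt hΓ hf haΓ hε
  refine ⟨r, hr, fun d c S T θ hc hS hT hTS hθ hθsum hlt => ?_⟩
  set A := (2 * m + δ) * S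
  have hA : 0 ≤ A := by positivity
  have hθle : ∀ i, θ i ≤ 1 := fun i =>
    hθsum ▸ Finset.single_le_sum (fun j _ => hθ j) (Finset.mem_univ i)
  have hv : (fun i => a i * d + θ i * (T * c)) ∈ ball a r :=
    mem_ball_of_abs_sub_mul_le hr ham (fun i => by
      rw [add_sub_cancel_left, abs_of_nonneg (mul_nonneg (hθ i) (mul_nonneg hT hc))]
      nlinarith [mul_le_mul_of_nonneg_right (hθle i) (mul_nonneg hT hc),
        mul_le_mul_of_nonneg_right hTS hc, mul_nonneg (mul_nonneg hδ.le hS) hc]) hlt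
  have hw : (fun i => if i = i₀ then a i * d + A * c else a i * d) ∈ ball a r :=
    mem_ball_of_abs_sub_mul_le hr ham (fun i => by
      split_ifs <;> simp [abs_of_nonneg (mul_nonneg hA hc), mul_nonneg hA hc]) hlt
  have hseg := (convex_ball a r).segment_subset hv hw
  refine le_of_forall_mem_segment_fderiv_nonneg (fun z hz => (hball z (hseg hz)).1)
    fun z hz => ?_
  have hdir : ((fun i => if i = i₀ then a i * d + A * c else a i * d) -
      fun i => a i * d + θ i * (T * c)) = c • (Pi.single i₀ A - T • θ) := by
    funext i
    by_cases hi : i = i₀ <;> simp [hi] <;> ring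
  have hnear := (hball z (hseg hz)).2
  rw [hdir, map_smul, smul_eq_mul]
  refine mul_nonneg hc
    (apply_single_sub_smul_nonneg _ hθ hθsum (p := p) (ε := ε) (fun i => ?_) ?_ hA hT ?_)
  · linarith [(abs_lt.mp (hnear i)).2, hmax i]
  · linarith [(abs_lt.mp (hnear i₀)).1]
  · calc T * (p + ε) ≤ 2 * m * S * (p + ε) := by gcongr
      _ = A * (p - ε) := by rw [mul_right_comm, hbalance]; ring

end Coordinates

/-- Lemma 3.2 of the paper: under positivity of the partials of `f`, dominance of
`∂f/∂λ₁(a)`, `u' > 0`, `u'' ≥ 0`, `u'(s) → 1` and `s u''(s) → 0`, there is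
`s̄ > 0` such that for `s > s̄`,
`f(λ(D²u)) ≤ f(a₁u' + (2aₙ+δ)su'', a₂u', …, aₙu')`, provided both vectors (and
the segment between them) lie in `Γ`, where `λᵢ = aᵢu' + θᵢUu''`. -/
theorem supersolution_comparison {n : ℕ} (hn : 0 < n) (Γ : Set (Fin n → ℝ))
    (hopen : IsOpen Γ)
    (hpos : {v : Fin n → ℝ | ∀ i, 0 < v i} ⊆ Γ)
    (f : (Fin n → ℝ) → ℝ) (hf : ContDiffOn ℝ 1 f Γ)
    (hderiv : ∀ v ∈ Γ, ∀ i, 0 < fderiv ℝ f v (Pi.single i 1))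
    (a : Fin n → ℝ) (ha : ∀ i, 0 < a i) (hamono : Monotone a)
    (hmaxa : ∀ i, fderiv ℝ f a (Pi.single i 1)
        ≤ fderiv ℝ f a (Pi.single (⟨0, hn⟩ : Fin n) 1))
    (δ : ℝ) (hδ : 0 < δ)
    (u : ℝ → ℝ)
    (hu'' : ∀ s : ℝ, 0 < s → 0 ≤ deriv (deriv u) s)
    (hu'lim : Tendsto (deriv u) atTop (nhds 1))
    (hu''lim : Tendsto (fun s => s * deriv (deriv u) s) atTop (nhds 0))
    (θ : (Fin n → ℝ) → Fin n → ℝ)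
    (hθ : ∀ x i, θ x i ∈ Set.Ioo (0:ℝ) 1) (hθsum : ∀ x, ∑ i, θ x i = 1) :
    ∃ sbar : ℝ, 0 < sbar ∧
      ∀ x : Fin n → ℝ,
        sbar < (1/2) * ∑ k, a k * x k ^ 2 →
        (fun i => a i * deriv u ((1/2) * ∑ k, a k * x k ^ 2)
            + θ x i * ((∑ k, (a k) ^ 2 * (x k) ^ 2)
                * deriv (deriv u) ((1/2) * ∑ k, a k * x k ^ 2))) ∈ Γ →
        (fun i => if i = (⟨0, hn⟩ : Fin n)
            then a i * deriv u ((1/2) * ∑ k, a k * x k ^ 2)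
              + (2 * a ⟨n - 1, by omega⟩ + δ) * ((1/2) * ∑ k, a k * x k ^ 2)
                * deriv (deriv u) ((1/2) * ∑ k, a k * x k ^ 2)
            else a i * deriv u ((1/2) * ∑ k, a k * x k ^ 2)) ∈ Γ →
        segment ℝ
          (fun i => a i * deriv u ((1/2) * ∑ k, a k * x k ^ 2)
            + θ x i * ((∑ k, (a k) ^ 2 * (x k) ^ 2)
                * deriv (deriv u) ((1/2) * ∑ k, a k * x k ^ 2)))
          (fun i => if i = (⟨0, hn⟩ : Fin n)
            then a i * deriv u ((1/2) * ∑ k, a k * x k ^ 2)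
              + (2 * a ⟨n - 1, by omega⟩ + δ) * ((1/2) * ∑ k, a k * x k ^ 2)
                * deriv (deriv u) ((1/2) * ∑ k, a k * x k ^ 2)
            else a i * deriv u ((1/2) * ∑ k, a k * x k ^ 2)) ⊆ Γ →
        f (fun i => a i * deriv u ((1/2) * ∑ k, a k * x k ^ 2)
            + θ x i * ((∑ k, (a k) ^ 2 * (x k) ^ 2)
                * deriv (deriv u) ((1/2) * ∑ k, a k * x k ^ 2)))
          ≤ f (fun i => if i = (⟨0, hn⟩ : Fin n)
            then a i * deriv u ((1/2) * ∑ k, a k * x k ^ 2)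
              + (2 * a ⟨n - 1, by omega⟩ + δ) * ((1/2) * ∑ k, a k * x k ^ 2)
                * deriv (deriv u) ((1/2) * ∑ k, a k * x k ^ 2)
            else a i * deriv u ((1/2) * ∑ k, a k * x k ^ 2)) := by
  set m := a ⟨n - 1, by omega⟩
  have ham : ∀ i, a i ≤ m := fun i => hamono (Fin.le_def.mpr (Nat.le_sub_one_of_lt i.isLt))
  obtain ⟨r, hr, hcomp⟩ := exists_ball_comparison hopen hf (hpos ha) (hderiv a (hpos ha) _) hmaxa
    (fun i => (abs_of_pos (ha i)).trans_le (ham i)) hδ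
  have hsmall : Tendsto (fun s => m * |deriv u s - 1| + (2 * m + δ) * s * deriv (deriv u) s)
      atTop (𝓝 0) := by
    simpa [mul_assoc] using
      ((hu'lim.sub_const 1).abs.const_mul m).add (hu''lim.const_mul (2 * m + δ))
  obtain ⟨N, hN⟩ := eventually_atTop.mp (hsmall.eventually_lt_const hr)
  refine ⟨max N 1, by positivity, fun x hx _ _ _ => ?_⟩
  have hS : 0 < (1/2) * ∑ k, a k * x k ^ 2 := (zero_lt_one.trans_le (le_max_right N 1)).trans hx
  have hT := sum_sq_mul_sq_le (x := x) (fun i => (ha i).le) ham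
  exact hcomp _ _ _ _ (θ x) (hu'' _ hS) hS.le (by positivity) (by linarith)
    (fun i => (hθ x i).1.le) (hθsum x) (hN _ ((le_max_left N 1).trans hx.le))
end
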